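/- Let T : I → I be a symmetric interval exchange transformation. If T has a connection that does not contain any point from the set {c_α : α ∈ 𝒜 ∪ {1/2}}, then T is not ergodic with respect to Lebesgue measure on I. -/

import Mathlib

open MeasureTheory Set
open scoped Classical

/-- An interval exchange transformation (IET) on the interval `[a, b)`:
an alphabet `Fin d`, bijections `perm0`, `perm1 : Fin d ≃ Fin d` describing the order of
the exchanged intervals before and after applying the map, and a positive length vector
`len` summing up to `b - a`.  The permutation datum is assumed non-reducible. -/
structure IET where
  d : ℕ
  hd : 0 < d
  a : ℝ
  b : ℝ
  hab : a < b
  perm0 : Fin d ≃ Fin d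
  perm1 : Fin d ≃ Fin d
  len : Fin d → ℝ
  len_pos : ∀ α, 0 < len α
  len_sum : ∑ α, len α = b - a
  irred : ∀ k : ℕ, 0 < k → k < d → ¬ (∀ α, (perm0 α : ℕ) < k ↔ (perm1 α : ℕ) < k)

namespace IET

variable (T : IET)

/-- The left endpoint `∂I_α` of the exchanged interval `I_α`. -/
noncomputable def lep (α : Fin T.d) : ℝ :=
  T.a + ∑ β ∈ Finset.univ.filter (fun β => T.perm0 β < T.perm0 α), T.len β

/-- The left endpoint of the image interval `T(I_α)`. -/
noncomputable def lepImg (α : Fin T.d) : ℝ :=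
  T.a + ∑ β ∈ Finset.univ.filter (fun β => T.perm1 β < T.perm1 α), T.len β

/-- The translation amount on `I_α`. -/
noncomputable def transl (α : Fin T.d) : ℝ := T.lepImg α - T.lep α

/-- The exchanged interval `I_α`. -/
noncomputable def interval (α : Fin T.d) : Set ℝ :=
  Set.Ico (T.lep α) (T.lep α + T.len α)

/-- The image interval `T(I_α)`. -/
noncomputable def intervalImg (α : Fin T.d) : Set ℝ :=
  Set.Ico (T.lepImg α) (T.lepImg α + T.len α)

/-- The IET as a self-map of `ℝ`: it translates each `I_α` onto its image and is
the identity outside `[a, b)`. -/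
noncomputable def toFun (x : ℝ) : ℝ :=
  x + ∑ α, if x ∈ T.interval α then T.transl α else 0

/-- The inverse IET `T⁻¹` as a self-map of `ℝ`. -/
noncomputable def invFun (x : ℝ) : ℝ :=
  x + ∑ α, if x ∈ T.intervalImg α then -T.transl α else 0

/-- The iterate `T^n`, `n : ℤ` (negative iterates via `invFun`). -/
noncomputable def iter (n : ℤ) (x : ℝ) : ℝ :=
  if 0 ≤ n then T.toFun^[n.toNat] x else T.invFun^[(-n).toNat] x

/-- `M(β) = min {n ≥ 1 | T^{-n}(∂I_β) = ∂I_α for some α with π₁ α ≠ 1}`, with the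
convention `M(π₀⁻¹ 1) = 1`, and `∞` if no such `n` exists. -/
noncomputable def M (β : Fin T.d) : ℕ∞ :=
  if (T.perm0 β : ℕ) = 0 then 1
  else sInf {e : ℕ∞ | ∃ n : ℕ, e = (n : ℕ∞) ∧ 1 ≤ n ∧
    ∃ α : Fin T.d, (T.perm1 α : ℕ) ≠ 0 ∧ T.invFun^[n] (T.lep β) = T.lep α}

/-- `N(β) = min {n ≥ 1 | T^{n}(∂I_β) = ∂I_α for some α with π₀ α ≠ 1}`, with the
convention `N(π₁⁻¹ 1) = 1`, and `∞` if no such `n` exists. -/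
noncomputable def N (β : Fin T.d) : ℕ∞ :=
  if (T.perm1 β : ℕ) = 0 then 1
  else sInf {e : ℕ∞ | ∃ n : ℕ, e = (n : ℕ∞) ∧ 1 ≤ n ∧
    ∃ α : Fin T.d, (T.perm0 α : ℕ) ≠ 0 ∧ T.toFun^[n] (T.lep β) = T.lep α}

/-- `s` is a (non-trivial) connection of `T`: the orbit segment
`{T^{-k}(∂I_β) | 0 ≤ k ≤ n}` where `π₀ β ≠ 1`, `π₁ α ≠ 1`, `n ≥ 1` and
`T^{-n}(∂I_β) = ∂I_α`. -/
def IsConnection (s : Set ℝ) : Prop :=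
  ∃ (β α : Fin T.d) (n : ℕ), (T.perm0 β : ℕ) ≠ 0 ∧ (T.perm1 α : ℕ) ≠ 0 ∧ 1 ≤ n ∧
    T.invFun^[n] (T.lep β) = T.lep α ∧
    s = (fun k : ℕ => T.invFun^[k] (T.lep β)) '' {k : ℕ | k ≤ n}

/-- `T` is symmetric: `π₁ ∘ π₀⁻¹ (i) = d + 1 - i` (here with `Fin d` indexing:
`perm1 α + perm0 α + 1 = d`). -/
def IsSymm : Prop := ∀ α, (T.perm1 α : ℕ) + (T.perm0 α : ℕ) + 1 = T.d

/-- The midpoint `c_α` of the exchanged interval `I_α`. -/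
noncomputable def center (α : Fin T.d) : ℝ := T.lep α + T.len α / 2

/-- The midpoint `c_{1/2}` of the interval `I = [a, b)`. -/
noncomputable def centerHalf : ℝ := (T.a + T.b) / 2

/-- Midpoints indexed by `𝒜 ∪ {1/2}`; `none` plays the role of `1/2`. -/
noncomputable def centerOpt (β : Option (Fin T.d)) : ℝ :=
  match β with
  | none => T.centerHalf
  | some α => T.center α

/-- `δ_{1/2}`. -/
def deltaHalf (β : Option (Fin T.d)) : ℕ :=
  match β with
  | none => 1
  | some _ => 0

/-- The symmetric reflection `𝓘_I (x) = a + b - x` of `I = [a, b)`. -/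
noncomputable def refl (x : ℝ) : ℝ := T.a + T.b - x

/-- The first return time `r_J(x) = min {n ≥ 1 | T^n x ∈ J}`. -/
noncomputable def returnTime (J : Set ℝ) (x : ℝ) : ℕ :=
  sInf {n : ℕ | 1 ≤ n ∧ T.toFun^[n] x ∈ J}

/-- The first return map `T_J`. -/
noncomputable def firstReturn (J : Set ℝ) (x : ℝ) : ℝ := T.toFun^[T.returnTime J x] x

/-- The first backward return time `b_J(x) = min {n ≥ 1 | T^{-n} x ∈ J}`. -/
noncomputable def backTime (J : Set ℝ) (x : ℝ) : ℕ :=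
  sInf {n : ℕ | 1 ≤ n ∧ T.invFun^[n] x ∈ J}

/-- The first backward return map `p_J` (the inverse of the first return map `T_J`). -/
noncomputable def backReturn (J : Set ℝ) (x : ℝ) : ℝ := T.invFun^[T.backTime J x] x

/-- `m_{J,α} = inf {n ≥ 0 | T^{-n}(∂I_α) ∈ interior J}`. -/
noncomputable def mJ (J : Set ℝ) (α : Fin T.d) : ℕ :=
  sInf {n : ℕ | T.invFun^[n] (T.lep α) ∈ interior J}

/-- `J` is of form (★): a subinterval `[a_J, b_J) ⊆ I` whose endpoints are iterates
`T^{m₀}(∂I_{α_J})`, `T^{n₀}(∂I_{β_J})` of left endpoints which do not visit `J` at any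
earlier time between `0` and `m₀` (resp. `n₀`). -/
def IsStarForm (J : Set ℝ) : Prop :=
  ∃ (aJ bJ : ℝ) (αJ βJ : Fin T.d) (m₀ n₀ : ℤ),
    aJ < bJ ∧ J = Set.Ico aJ bJ ∧ J ⊆ Set.Ico T.a T.b ∧
    aJ = T.iter m₀ (T.lep αJ) ∧ bJ = T.iter n₀ (T.lep βJ) ∧
    (∀ m : ℤ, (0 ≤ m ∧ m ≤ m₀ ∨ m₀ ≤ m ∧ m ≤ 0) → m ≠ m₀ → T.iter m (T.lep αJ) ∉ J) ∧
    (∀ n : ℤ, (0 ≤ n ∧ n ≤ n₀ ∨ n₀ ≤ n ∧ n ≤ 0) → n ≠ n₀ → T.iter n (T.lep βJ) ∉ J)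

/-- `J` is a `β`-symmetric interval (`β : Option (Fin T.d)`, `none` = `1/2`-symmetric):
`J = [c_β - Δ, c_β + Δ)` with `Δ > 0`, contained in `I_β` (resp. in `I`). -/
def IsSymmetricInterval (J : Set ℝ) (β : Option (Fin T.d)) : Prop :=
  ∃ Δ : ℝ, 0 < Δ ∧ J = Set.Ico (T.centerOpt β - Δ) (T.centerOpt β + Δ) ∧
    (match β with
      | some γ => J ⊆ T.interval γ
      | none => J ⊆ Set.Ico T.a T.b)

/-- `x` is a left endpoint of one of the intervals exchanged by the first return map
`T_J`, where `J = [aJ, bJ)`: either `x = aJ`, or the forward orbit of `x` before its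
first return to `J` meets a left endpoint `∂I_α` of `T` or the right endpoint `bJ`. -/
def IsExchLeftEndpoint (J : Set ℝ) (aJ bJ : ℝ) (x : ℝ) : Prop :=
  x = aJ ∨ ∃ k : ℕ, k < T.returnTime J x ∧
    ((∃ α : Fin T.d, T.toFun^[k] x = T.lep α) ∨ (1 ≤ k ∧ T.toFun^[k] x = bJ))

/-- A Rokhlin tower decomposition of `I = [a, b)` over `J = [aJ, bJ)` associated with the
first return map `T_J`: the bases `[base γ, base γ + blen γ)` partition `J`, the return
time on the base `γ` is constantly `h γ`, each `T^i` (`i ≤ h γ`) acts as a translation on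
the base `γ`, and the tower levels `T^i([base γ, base γ + blen γ))`, `i < h γ`, are
pairwise disjoint and partition `I`. -/
def IsTowerDecomp (aJ bJ : ℝ) {k : ℕ} (base blen : Fin k → ℝ) (h : Fin k → ℕ) : Prop :=
  (∀ γ, 0 < blen γ) ∧ (∀ γ, 1 ≤ h γ) ∧
  Pairwise (Function.onFun Disjoint fun γ => Set.Ico (base γ) (base γ + blen γ)) ∧
  (⋃ γ, Set.Ico (base γ) (base γ + blen γ)) = Set.Ico aJ bJ ∧
  (∀ γ, ∀ i ≤ h γ, ∀ x ∈ Set.Ico (base γ) (base γ + blen γ),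
    T.toFun^[i] x - T.toFun^[i] (base γ) = x - base γ) ∧
  (∀ γ, ∀ x ∈ Set.Ico (base γ) (base γ + blen γ), T.returnTime (Set.Ico aJ bJ) x = h γ) ∧
  (⋃ γ, ⋃ i ∈ Finset.range (h γ), T.toFun^[i] '' Set.Ico (base γ) (base γ + blen γ))
    = Set.Ico T.a T.b ∧
  (∀ γ γ' : Fin k, ∀ i i' : ℕ, i < h γ → i' < h γ' → (γ, i) ≠ (γ', i') →
    Disjoint (T.toFun^[i] '' Set.Ico (base γ) (base γ + blen γ))
      (T.toFun^[i'] '' Set.Ico (base γ') (base γ' + blen γ')))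

/-- Replace the length data of an IET, keeping the combinatorial data. -/
noncomputable abbrev replaceLen (len' : Fin T.d → ℝ) (h1 : ∀ α, 0 < len' α)
    (h2 : ∑ α, len' α = T.b - T.a) : IET :=
  { T with len := len', len_pos := h1, len_sum := h2 }

end IET

open IET

/-!
Shorten the connection until it avoids every midpoint and meets no left endpoint strictly
between its ends. Its points, the last one excepted, together with their mirror images under
`𝓘_I x = a + b - x`, form a finite set of walls, a point met by both counting as no wall. On each
`I_γ` a symmetric IET is the reflection of `I_γ` about `c_γ` followed by `𝓘_I`, and away from left
endpoints both maps preserve the walls; so the parity of the number of walls in `(-∞, x]` is a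
`T`-invariant function of `x`. There is at least one wall, so both parities occur on intervals
of positive length.
-/

open scoped symmDiff

lemma volume_restrict_Ico_ne_zero_of_Ico_subset {a b u v : ℝ} {s : Set ℝ} (huv : u < v)
    (hsub : Ico u v ⊆ s ∩ Ico a b) : volume.restrict (Ico a b) s ≠ 0 := by
  rw [Measure.restrict_apply' measurableSet_Ico]
  exact (measure_mono hsub).trans_lt' (by simpa using huv) |>.ne'

namespace Finset

lemma card_filter_eq_add {α : Type*} {S : Finset α} {p q r : α → Prop} [DecidablePred p]
    [DecidablePred q] [DecidablePred r] (hpqr : ∀ z ∈ S, p z ↔ q z ∨ r z)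
    (hqr : ∀ z, q z → ¬ r z) : #(S.filter p) = #(S.filter q) + #(S.filter r) := by
  rw [← card_union_of_disjoint (disjoint_filter.2 fun z _ => hqr z), ← filter_or]
  exact congrArg card (filter_congr hpqr)

lemma card_filter_eq_of_reflect {α : Type*} [AddCommGroup α] {S : Finset α} {c : α}
    {p q : α → Prop} [DecidablePred p] [DecidablePred q] (hpq : ∀ z, q (c - z) ↔ p z)
    (hS : ∀ z, p z → (c - z ∈ S ↔ z ∈ S)) : #(S.filter q) = #(S.filter p) := by
  refine card_nbij' (c - ·) (c - ·) ?_ ?_ (fun z _ => sub_sub_cancel c z)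
    (fun z _ => sub_sub_cancel c z)
  · intro z hz
    simp only [coe_filter, Set.mem_ofPred_eq] at hz ⊢
    have hp : p (c - z) := by rw [← hpq, sub_sub_cancel]; exact hz.2
    exact ⟨(hS _ hp).1 (by rw [sub_sub_cancel]; exact hz.1), hp⟩
  · intro z hz
    simp only [coe_filter, Set.mem_ofPred_eq] at hz ⊢
    exact ⟨(hS z hz.2).2 hz.1, (hpq z).2 hz.2⟩

variable {S : Finset ℝ}

lemma even_card_of_reflect {c : ℝ} (hS : ∀ z, c - z ∈ S ↔ z ∈ S) (hc : c / 2 ∉ S) :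
    Even #S := by
  have hsplit : #S = #(S.filter (· < c / 2)) + #(S.filter (c / 2 < ·)) := by
    rw [← card_filter_add_card_filter_not (· < c / 2)]
    refine congrArg _ (congrArg card (filter_congr fun z hz => ?_))
    have := ne_of_mem_of_not_mem hz hc
    grind
  rw [hsplit, card_filter_eq_of_reflect (p := (· < c / 2)) (q := (c / 2 < ·))
    (fun z => by constructor <;> intro h <;> linarith) (fun z _ => hS z)]
  exact ⟨_, rfl⟩

def evenBelow (S : Finset ℝ) : Set ℝ := {t | Even #(S.filter (· ≤ t))}

lemma measurableSet_evenBelow : MeasurableSet S.evenBelow := by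
  have hmono : Monotone fun t : ℝ => #(S.filter (· ≤ t)) := fun s t hst =>
    card_le_card (monotone_filter_right S fun _ _ h => le_trans h hst)
  exact hmono.measurable (MeasurableSet.of_discrete (s := {k : ℕ | Even k}))

lemma volume_restrict_evenBelow_ne_zero {a b : ℝ} (hS : S.Nonempty)
    (hSab : ↑S ⊆ Set.Ioo a b) : volume.restrict (Set.Ico a b) S.evenBelow ≠ 0 := by
  have hmin := hSab (S.min'_mem hS)
  refine volume_restrict_Ico_ne_zero_of_Ico_subset hmin.1
    fun t ht => ⟨?_, ht.1, ht.2.trans hmin.2⟩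
  rw [evenBelow, Set.mem_ofPred_eq, filter_false_of_mem fun z hz hzt => ?_]
  · exact Even.zero
  · exact absurd ((S.min'_le z hz).trans hzt) (not_le.2 ht.2)

lemma volume_restrict_compl_evenBelow_ne_zero {a b : ℝ} (hS : S.Nonempty)
    (hSab : ↑S ⊆ Set.Ioo a b) : volume.restrict (Set.Ico a b) S.evenBelowᶜ ≠ 0 := by
  set w := S.min' hS
  have hw := hSab (S.min'_mem hS)
  set m := (insert b (S.erase w)).min' (insert_nonempty _ _)
  have hwm : w < m := by
    refine (lt_min'_iff _ _).2 fun z hz => ?_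
    rcases mem_insert.1 hz with rfl | hz
    · exact hw.2
    · exact lt_of_le_of_ne (S.min'_le z (mem_of_mem_erase hz)) (ne_of_mem_erase hz).symm
  have hmb : m ≤ b := min'_le _ _ (mem_insert_self _ _)
  refine volume_restrict_Ico_ne_zero_of_Ico_subset hwm
    fun t ht => ⟨?_, hw.1.le.trans ht.1, ht.2.trans_le hmb⟩
  have hfilter : S.filter (· ≤ t) = {w} := by
    refine eq_singleton_iff_unique_mem.2 ⟨mem_filter.2 ⟨S.min'_mem hS, ht.1⟩, fun z hz => ?_⟩
    rw [mem_filter] at hz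
    by_contra hne
    have hmz : m ≤ z := min'_le _ z (mem_insert_of_mem (mem_erase.2 ⟨hne, hz.1⟩))
    exact absurd (hmz.trans hz.2) (not_le.2 ht.2)
  simp [evenBelow, hfilter]

end Finset

namespace IET

noncomputable def cumLen (T : IET) (p : Fin T.d ≃ Fin T.d) (j : ℕ) : ℝ :=
  T.a + ∑ β ∈ Finset.univ.filter (fun β => (p β : ℕ) < j), T.len β

noncomputable def piece (T : IET) (p : Fin T.d ≃ Fin T.d) (γ : Fin T.d) : Set ℝ :=
  Ico (T.cumLen p (p γ)) (T.cumLen p (p γ) + T.len γ)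

section Partition

variable {T : IET} (p : Fin T.d ≃ Fin T.d)

lemma cumLen_zero : T.cumLen p 0 = T.a := by
  simp [cumLen]

lemma cumLen_mono : Monotone (T.cumLen p) := fun j k hjk => by
  unfold cumLen
  gcongr
  exact fun β _ _ => (T.len_pos β).le

lemma cumLen_of_le {j : ℕ} (h : T.d ≤ j) : T.cumLen p j = T.b := by
  rw [cumLen, Finset.filter_true_of_mem fun β _ => lt_of_lt_of_le (p β).isLt h, T.len_sum]
  ring

lemma cumLen_succ (γ : Fin T.d) : T.cumLen p (p γ + 1) = T.cumLen p (p γ) + T.len γ := by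
  have hfilter : Finset.univ.filter (fun β => (p β : ℕ) < p γ + 1) =
      insert γ (Finset.univ.filter fun β => (p β : ℕ) < p γ) := by
    ext β
    simp only [Finset.mem_filter, Finset.mem_univ, true_and, Finset.mem_insert]
    rw [← p.injective.eq_iff, Fin.ext_iff]
    omega
  rw [cumLen, cumLen, hfilter, Finset.sum_insert (by simp)]
  ring

lemma cumLen_add_len_le {γ γ' : Fin T.d} (h : (p γ : ℕ) < p γ') :
    T.cumLen p (p γ) + T.len γ ≤ T.cumLen p (p γ') :=
  cumLen_succ p γ ▸ cumLen_mono p h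

lemma piece_subset_Ico (γ : Fin T.d) : T.piece p γ ⊆ Ico T.a T.b := by
  have ha : T.a ≤ T.cumLen p (p γ) := cumLen_zero p ▸ cumLen_mono p (Nat.zero_le _)
  have hb : T.cumLen p (p γ) + T.len γ ≤ T.b :=
    cumLen_succ p γ ▸ (cumLen_mono p (p γ).isLt).trans (cumLen_of_le p le_rfl).le
  exact fun x hx => ⟨ha.trans hx.1, hx.2.trans_le hb⟩

lemma exists_mem_piece {x : ℝ} (hx : x ∈ Ico T.a T.b) : ∃ γ, x ∈ T.piece p γ := by
  set j := Nat.findGreatest (fun j => T.cumLen p j ≤ x) (T.d - 1)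
  have hjd : j < T.d := (Nat.findGreatest_le _).trans_lt (Nat.sub_lt T.hd one_pos)
  have hj : T.cumLen p j ≤ x := Nat.findGreatest_spec (P := fun j => T.cumLen p j ≤ x)
    (Nat.zero_le _) (by rw [cumLen_zero]; exact hx.1)
  have hj1 : x < T.cumLen p (j + 1) := by
    by_cases hjd' : j + 1 ≤ T.d - 1
    · exact not_le.1 (Nat.findGreatest_is_greatest (Nat.lt_succ_self j) hjd')
    · rw [cumLen_of_le p (by omega)]; exact hx.2
  refine ⟨p.symm ⟨j, hjd⟩, ?_⟩
  have hγ : ((p (p.symm ⟨j, hjd⟩)) : ℕ) = j := by simp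
  rw [piece, ← cumLen_succ, hγ]
  exact ⟨hj, hj1⟩

lemma eq_of_mem_piece {x : ℝ} {γ γ' : Fin T.d} (h : x ∈ T.piece p γ) (h' : x ∈ T.piece p γ') :
    γ = γ' := by
  by_contra hne
  have hne' : (p γ : ℕ) ≠ p γ' := fun heq => hne (p.injective (Fin.ext heq))
  rcases Nat.lt_or_gt_of_ne hne' with hlt | hlt
  · exact absurd (h.2.trans_le (cumLen_add_len_le p hlt)) (not_lt.2 h'.1)
  · exact absurd (h'.2.trans_le (cumLen_add_len_le p hlt)) (not_lt.2 h.1)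

end Partition

section Dynamics

variable {T : IET} {x : ℝ} {γ γ' : Fin T.d}

lemma lep_eq_cumLen (γ : Fin T.d) : T.lep γ = T.cumLen T.perm0 (T.perm0 γ) := rfl

lemma exists_mem_interval (hx : x ∈ Ico T.a T.b) : ∃ γ, x ∈ T.interval γ :=
  exists_mem_piece T.perm0 hx

lemma exists_mem_intervalImg (hx : x ∈ Ico T.a T.b) : ∃ γ, x ∈ T.intervalImg γ :=
  exists_mem_piece T.perm1 hx

lemma eq_of_mem_interval (h : x ∈ T.interval γ) (h' : x ∈ T.interval γ') : γ = γ' :=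
  eq_of_mem_piece T.perm0 h h'

lemma eq_of_mem_intervalImg (h : x ∈ T.intervalImg γ) (h' : x ∈ T.intervalImg γ') : γ = γ' :=
  eq_of_mem_piece T.perm1 h h'

lemma interval_subset_Ico (γ : Fin T.d) : T.interval γ ⊆ Ico T.a T.b :=
  piece_subset_Ico T.perm0 γ

lemma lep_mem_interval (γ : Fin T.d) : T.lep γ ∈ T.interval γ :=
  ⟨le_rfl, lt_add_of_pos_right _ (T.len_pos γ)⟩

lemma lepImg_mem_intervalImg (γ : Fin T.d) : T.lepImg γ ∈ T.intervalImg γ :=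
  ⟨le_rfl, lt_add_of_pos_right _ (T.len_pos γ)⟩

lemma lep_perm0_symm_zero : T.lep (T.perm0.symm ⟨0, T.hd⟩) = T.a := by
  simp [lep_eq_cumLen, cumLen_zero]

lemma exists_lep_add_len_eq_lep (h : (T.perm0 γ : ℕ) ≠ 0) :
    ∃ γ', T.lep γ' + T.len γ' = T.lep γ := by
  refine ⟨T.perm0.symm ⟨T.perm0 γ - 1, by omega⟩, ?_⟩
  rw [lep_eq_cumLen, lep_eq_cumLen, ← cumLen_succ]
  congr 1
  simp only [Equiv.apply_symm_apply]
  omega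

lemma exists_lep_eq_lep_add_len (h : (T.perm0 γ : ℕ) + 1 < T.d) :
    ∃ γ', T.lep γ' = T.lep γ + T.len γ := by
  refine ⟨T.perm0.symm ⟨T.perm0 γ + 1, h⟩, ?_⟩
  rw [lep_eq_cumLen, lep_eq_cumLen, ← cumLen_succ]
  simp

lemma a_lt_lep (h : (T.perm0 γ : ℕ) ≠ 0) : T.a < T.lep γ := by
  obtain ⟨γ', hγ'⟩ := exists_lep_add_len_eq_lep h
  linarith [(interval_subset_Ico γ' (lep_mem_interval γ')).1, T.len_pos γ']

lemma ne_lep_of_mem_Ioo (hx : x ∈ Ioo (T.lep γ) (T.lep γ + T.len γ)) (γ' : Fin T.d) :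
    x ≠ T.lep γ' := by
  rintro rfl
  have := eq_of_mem_interval (Ioo_subset_Ico_self hx) (lep_mem_interval γ')
  exact hx.1.ne' (congrArg T.lep this).symm

lemma toFun_of_mem (hx : x ∈ T.interval γ) : T.toFun x = x - T.lep γ + T.lepImg γ := by
  rw [toFun, Finset.sum_eq_single_of_mem γ (Finset.mem_univ _)
    fun α _ hα => if_neg fun h => hα (eq_of_mem_interval h hx), if_pos hx, transl]
  ring

lemma invFun_of_mem (hx : x ∈ T.intervalImg γ) : T.invFun x = x - T.lepImg γ + T.lep γ := by
  rw [invFun, Finset.sum_eq_single_of_mem γ (Finset.mem_univ _)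
    fun α _ hα => if_neg fun h => hα (eq_of_mem_intervalImg h hx), if_pos hx, transl]
  ring

lemma toFun_of_notMem (hx : x ∉ Ico T.a T.b) : T.toFun x = x := by
  rw [toFun, Finset.sum_eq_zero fun α _ => if_neg fun h => hx (interval_subset_Ico α h),
    add_zero]

lemma toFun_mem_intervalImg (hx : x ∈ T.interval γ) : T.toFun x ∈ T.intervalImg γ := by
  rw [toFun_of_mem hx]
  exact ⟨by linarith [hx.1], by linarith [hx.2]⟩

lemma invFun_mem_interval (hx : x ∈ T.intervalImg γ) : T.invFun x ∈ T.interval γ := by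
  rw [invFun_of_mem hx]
  exact ⟨by linarith [hx.1], by linarith [hx.2]⟩

lemma invFun_mem_Ico (hx : x ∈ Ico T.a T.b) : T.invFun x ∈ Ico T.a T.b :=
  have ⟨γ, hγ⟩ := exists_mem_intervalImg hx
  interval_subset_Ico γ (invFun_mem_interval hγ)

lemma invFun_toFun (hx : x ∈ Ico T.a T.b) : T.invFun (T.toFun x) = x := by
  obtain ⟨γ, hγ⟩ := exists_mem_interval hx
  rw [invFun_of_mem (toFun_mem_intervalImg hγ), toFun_of_mem hγ]
  ring

lemma toFun_invFun (hx : x ∈ Ico T.a T.b) : T.toFun (T.invFun x) = x := by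
  obtain ⟨γ, hγ⟩ := exists_mem_intervalImg hx
  rw [toFun_of_mem (invFun_mem_interval hγ), invFun_of_mem hγ]
  ring

lemma toFun_lep (γ : Fin T.d) : T.toFun (T.lep γ) = T.lepImg γ := by
  rw [toFun_of_mem (lep_mem_interval γ)]
  ring

lemma invFun_lepImg (γ : Fin T.d) : T.invFun (T.lepImg γ) = T.lep γ := by
  rw [invFun_of_mem (lepImg_mem_intervalImg γ)]
  ring

end Dynamics

section Symmetric

variable {T : IET} {x : ℝ} {γ : Fin T.d}

lemma refl_refl (T : IET) (x : ℝ) : T.refl (T.refl x) = x := by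
  simp [refl]

lemma lepImg_of_isSymm (hsymm : T.IsSymm) (γ : Fin T.d) :
    T.lepImg γ = T.a + T.b - (T.lep γ + T.len γ) := by
  have hfilter : Finset.univ.filter (fun β => T.perm1 β < T.perm1 γ) =
      Finset.univ.filter (fun β => ¬ (T.perm0 β : ℕ) < T.perm0 γ + 1) := by
    ext β
    simp only [Finset.mem_filter, Finset.mem_univ, true_and, Fin.lt_def]
    have := hsymm β
    have := hsymm γ
    omega
  have hsplit := Finset.sum_filter_add_sum_filter_not Finset.univ
    (fun β => (T.perm0 β : ℕ) < T.perm0 γ + 1) T.len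
  have hsucc := cumLen_succ T.perm0 γ
  rw [cumLen, cumLen] at hsucc
  rw [lepImg, hfilter, lep_eq_cumLen, cumLen]
  linarith [T.len_sum]

lemma toFun_eq_refl (hsymm : T.IsSymm) (hx : x ∈ T.interval γ) :
    T.toFun x = T.refl (2 * T.lep γ + T.len γ - x) := by
  rw [toFun_of_mem hx, lepImg_of_isSymm hsymm, refl]
  ring

lemma toFun_refl (hsymm : T.IsSymm) (hx : x ∈ Ico T.a T.b) (hne : ∀ γ, T.invFun x ≠ T.lep γ) :
    T.toFun (T.refl x) = T.refl (T.invFun x) := by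
  obtain ⟨γ, hγ⟩ := exists_mem_intervalImg hx
  have hxγ : T.lepImg γ < x :=
    lt_of_le_of_ne hγ.1 fun h => hne γ (by rw [← h, invFun_lepImg])
  have hsymmγ := lepImg_of_isSymm hsymm γ
  have hrefl : T.refl x ∈ T.interval γ := by
    refine ⟨?_, ?_⟩ <;> simp only [refl] <;> linarith [hγ.2]
  rw [toFun_of_mem hrefl, invFun_of_mem hγ, refl, refl]
  ring

end Symmetric

structure CleanConnection (T : IET) where
  β : Fin T.d
  α : Fin T.d
  n : ℕ
  one_le_n : 1 ≤ n
  perm0_β_ne_zero : (T.perm0 β : ℕ) ≠ 0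
  perm1_α_ne_zero : (T.perm1 α : ℕ) ≠ 0
  invFun_iterate_n : T.invFun^[n] (T.lep β) = T.lep α
  invFun_iterate_ne_lep : ∀ k, 0 < k → k < n → ∀ γ, T.invFun^[k] (T.lep β) ≠ T.lep γ
  invFun_iterate_ne_centerOpt : ∀ k ≤ n, ∀ σ, T.invFun^[k] (T.lep β) ≠ T.centerOpt σ

/-- A shortest connection avoiding the midpoints meets no left endpoint in between: one met at
`∂I_γ` would split it into two shorter ones, since `π₀ γ ≠ 1` or `π₁ γ ≠ 1`. -/
lemma exists_cleanConnection {T : IET} (hsymm : T.IsSymm)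
    (hconn : ∃ s, T.IsConnection s ∧ ∀ σ : Option (Fin T.d), T.centerOpt σ ∉ s) :
    Nonempty (CleanConnection T) := by
  obtain ⟨s, ⟨β, α, n, hβ, hα, hn, hlast, rfl⟩, hs⟩ := hconn
  have hP : ∃ m, ∃ β α : Fin T.d, (T.perm0 β : ℕ) ≠ 0 ∧ (T.perm1 α : ℕ) ≠ 0 ∧ 1 ≤ m ∧
      T.invFun^[m] (T.lep β) = T.lep α ∧
      ∀ k ≤ m, ∀ σ, T.invFun^[k] (T.lep β) ≠ T.centerOpt σ :=
    ⟨n, β, α, hβ, hα, hn, hlast, fun k hk σ h => hs σ (h ▸ ⟨k, hk, rfl⟩)⟩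
  obtain ⟨β, α, hβ, hα, hn, hlast, hcen⟩ := Nat.find_spec hP
  refine ⟨⟨β, α, Nat.find hP, hn, hβ, hα, hlast, fun k hk0 hkn γ hkγ => ?_, hcen⟩⟩
  have hγ := hsymm γ
  have hβd := (T.perm0 β).isLt
  by_cases h1 : (T.perm1 γ : ℕ) = 0
  · refine Nat.find_min hP (m := Nat.find hP - k) (by omega)
      ⟨γ, α, by omega, hα, by omega, ?_, fun j hj σ => ?_⟩
    · rw [← hkγ, ← Function.iterate_add_apply, Nat.sub_add_cancel hkn.le, hlast]
    · rw [← hkγ, ← Function.iterate_add_apply]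
      exact hcen (j + k) (by omega) σ
  · exact Nat.find_min hP hkn ⟨β, γ, hβ, h1, hk0, hkγ, fun j hj => hcen j (by omega)⟩

namespace CleanConnection

variable {T : IET} (C : CleanConnection T)

noncomputable def point (k : ℕ) : ℝ := T.invFun^[k] (T.lep C.β)

noncomputable def points : Finset ℝ := (Finset.range C.n).image C.point

noncomputable def mirror : Finset ℝ := C.points.image T.refl

noncomputable def walls : Finset ℝ := C.points ∆ C.mirror

variable {C} {x z : ℝ} {γ : Fin T.d}

section Points

lemma point_succ (k : ℕ) : C.point (k + 1) = T.invFun (C.point k) :=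
  Function.iterate_succ_apply' _ _ _

lemma point_mem_Ico (k : ℕ) : C.point k ∈ Ico T.a T.b := by
  induction k with
  | zero => exact interval_subset_Ico _ (lep_mem_interval _)
  | succ k ih => rw [point_succ]; exact invFun_mem_Ico ih

lemma toFun_point_succ (k : ℕ) : T.toFun (C.point (k + 1)) = C.point k := by
  rw [point_succ, toFun_invFun (point_mem_Ico k)]

lemma a_lt_point {k : ℕ} (hk : k < C.n) : T.a < C.point k := by
  rcases Nat.eq_zero_or_pos k with rfl | hk0
  · exact a_lt_lep C.perm0_β_ne_zero
  · refine lt_of_le_of_ne (point_mem_Ico k).1 fun h => ?_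
    exact C.invFun_iterate_ne_lep k hk0 hk _ (h ▸ lep_perm0_symm_zero).symm

lemma refl_point_mem_Ico {k : ℕ} (hk : k < C.n) : T.refl (C.point k) ∈ Ico T.a T.b := by
  have hmem := point_mem_Ico (C := C) k
  have := a_lt_point hk
  constructor <;> simp only [refl] <;> linarith [hmem.2]

lemma toFun_refl_point (hsymm : T.IsSymm) {k : ℕ} (hk : k + 1 < C.n) :
    T.toFun (T.refl (C.point k)) = T.refl (C.point (k + 1)) := by
  rw [point_succ, toFun_refl hsymm (point_mem_Ico k)]
  exact fun γ h => C.invFun_iterate_ne_lep (k + 1) k.succ_pos hk γ (by rw [← h, ← point_succ]; rfl)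

lemma exists_refl_point_pred_n_eq_lep (hsymm : T.IsSymm) :
    ∃ γ, T.refl (C.point (C.n - 1)) = T.lep γ := by
  obtain ⟨γ, hγ⟩ := exists_lep_eq_lep_add_len (γ := C.α)
    (by have := hsymm C.α; have := C.perm1_α_ne_zero; omega)
  have hlast : C.point (C.n - 1) = T.lepImg C.α := by
    rw [← toFun_point_succ, Nat.sub_add_cancel C.one_le_n, ← toFun_lep]
    exact congrArg T.toFun C.invFun_iterate_n
  refine ⟨γ, ?_⟩
  rw [hlast, hγ, lepImg_of_isSymm hsymm, refl]
  ring

lemma exists_refl_point_zero_eq_lepImg (hsymm : T.IsSymm) :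
    ∃ γ, T.refl (C.point 0) = T.lepImg γ := by
  obtain ⟨γ, hγ⟩ := exists_lep_add_len_eq_lep C.perm0_β_ne_zero
  refine ⟨γ, ?_⟩
  rw [lepImg_of_isSymm hsymm, hγ]
  rfl

lemma refl_point_eq_point_sub (hsymm : T.IsSymm) {j : ℕ} (hj : j < C.n)
    (h0 : T.refl (C.point 0) = C.point j) {k : ℕ} (hk : k ≤ j) :
    T.refl (C.point k) = C.point (j - k) := by
  induction k with
  | zero => exact h0
  | succ k ih =>
    rw [← toFun_refl_point hsymm (by omega), ih (by omega), ← toFun_point_succ (j - (k + 1)),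
      show j - (k + 1) + 1 = j - k by omega]

end Points

section Walls

lemma mem_points : z ∈ C.points ↔ ∃ k < C.n, C.point k = z := by
  simp [points]

lemma mem_mirror : z ∈ C.mirror ↔ T.refl z ∈ C.points := by
  refine ⟨fun h => ?_, fun h => Finset.mem_image.2 ⟨_, h, T.refl_refl z⟩⟩
  obtain ⟨y, hy, rfl⟩ := Finset.mem_image.1 h
  rwa [T.refl_refl]

lemma mem_points_or_mem_points_refl (hz : z ∈ C.walls) :
    z ∈ C.points ∨ T.refl z ∈ C.points := by
  rcases Finset.mem_symmDiff.1 hz with h | h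
  · exact Or.inl h.1
  · exact Or.inr (mem_mirror.1 h.1)

lemma refl_mem_walls : T.refl z ∈ C.walls ↔ z ∈ C.walls := by
  simp only [walls, Finset.mem_symmDiff, mem_mirror, T.refl_refl]
  tauto

lemma mem_points_iff_toFun (hx : x ∈ Ico T.a T.b) (hne : ∀ γ, x ≠ T.lep γ) :
    T.toFun x ∈ C.points ↔ x ∈ C.points := by
  simp only [mem_points]
  constructor
  · rintro ⟨k, hk, hkx⟩
    have hx' : C.point (k + 1) = x := by rw [point_succ, hkx, invFun_toFun hx]
    refine ⟨k + 1, lt_of_le_of_ne hk fun h => hne C.α ?_, hx'⟩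
    rw [← hx', h]
    exact C.invFun_iterate_n
  · rintro ⟨_ | k, hk, rfl⟩
    · exact absurd rfl (hne C.β)
    · exact ⟨k, by omega, (toFun_point_succ k).symm⟩

lemma mem_mirror_iff_toFun (hsymm : T.IsSymm) (hx : x ∈ Ico T.a T.b)
    (hne : ∀ γ, x ≠ T.lep γ) : T.toFun x ∈ C.mirror ↔ x ∈ C.mirror := by
  have hrefl : ∀ z, z ∈ C.mirror ↔ ∃ k < C.n, T.refl (C.point k) = z := fun z => by
    rw [mem_mirror, mem_points]
    exact exists_congr fun k => and_congr_right fun _ =>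
      ⟨fun h => by rw [h, T.refl_refl], fun h => by rw [← h, T.refl_refl]⟩
  simp only [hrefl]
  constructor
  · rintro ⟨_ | k, hk, hkx⟩
    · obtain ⟨γ, hγ⟩ := exists_refl_point_zero_eq_lepImg (C := C) hsymm
      exact absurd (by rw [← invFun_toFun hx, ← hkx, hγ, invFun_lepImg]) (hne γ)
    · refine ⟨k, by omega, ?_⟩
      rw [← invFun_toFun hx, ← hkx, ← toFun_refl_point hsymm hk,
        invFun_toFun (refl_point_mem_Ico (by omega))]
  · rintro ⟨k, hk, rfl⟩
    have hk1 : k + 1 < C.n := lt_of_le_of_ne hk fun h => by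
      obtain ⟨γ, hγ⟩ := exists_refl_point_pred_n_eq_lep (C := C) hsymm
      exact hne γ (by rw [← hγ, ← h]; rfl)
    exact ⟨k + 1, hk1, (toFun_refl_point hsymm hk1).symm⟩

lemma mem_walls_iff_toFun (hsymm : T.IsSymm) (hx : x ∈ Ico T.a T.b)
    (hne : ∀ γ, x ≠ T.lep γ) : T.toFun x ∈ C.walls ↔ x ∈ C.walls := by
  simp only [walls, Finset.mem_symmDiff, mem_points_iff_toFun hx hne,
    mem_mirror_iff_toFun hsymm hx hne]

lemma reflect_mem_walls (hsymm : T.IsSymm) (hz : z ∈ Ioo (T.lep γ) (T.lep γ + T.len γ)) :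
    2 * T.lep γ + T.len γ - z ∈ C.walls ↔ z ∈ C.walls := by
  rw [← refl_mem_walls, ← toFun_eq_refl hsymm (Ioo_subset_Ico_self hz)]
  exact mem_walls_iff_toFun hsymm (interval_subset_Ico γ (Ioo_subset_Ico_self hz))
    (ne_lep_of_mem_Ioo hz)

lemma centerHalf_notMem_walls : T.centerHalf ∉ C.walls := by
  have hrefl : T.refl T.centerHalf = T.centerHalf := by simp only [refl, centerHalf]; ring
  intro h
  obtain ⟨k, hk, hkz⟩ := mem_points.1 <|
    (mem_points_or_mem_points_refl h).elim id fun h' => by rwa [hrefl] at h'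
  exact C.invFun_iterate_ne_centerOpt k hk.le none hkz

lemma center_notMem_walls (hsymm : T.IsSymm) (γ : Fin T.d) : T.center γ ∉ C.walls := by
  intro h
  rcases mem_points_or_mem_points_refl h with h | h
  · obtain ⟨k, hk, hkz⟩ := mem_points.1 h
    exact C.invFun_iterate_ne_centerOpt k hk.le (some γ) hkz
  · have hc : T.center γ ∈ T.interval γ := by
      have := T.len_pos γ
      constructor <;> simp only [center] <;> linarith
    have hT : T.toFun (T.center γ) = T.refl (T.center γ) := by
      rw [toFun_eq_refl hsymm hc, center]
      ring_nf
    obtain ⟨k, hk, hkz⟩ := mem_points.1 h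
    refine C.invFun_iterate_ne_centerOpt (k + 1) hk (some γ) ?_
    show C.point (k + 1) = T.center γ
    rw [point_succ, hkz, ← hT, invFun_toFun (interval_subset_Ico γ hc)]

lemma walls_subset_Ioo (hz : z ∈ C.walls) : z ∈ Ioo T.a T.b := by
  have hpoints : ∀ y ∈ C.points, y ∈ Ioo T.a T.b := fun y hy => by
    obtain ⟨k, hk, rfl⟩ := mem_points.1 hy
    exact ⟨a_lt_point hk, (point_mem_Ico k).2⟩
  rcases mem_points_or_mem_points_refl hz with h | h
  · exact hpoints z h
  · have := hpoints _ h
    constructor <;> simp only [refl] at this <;> linarith [this.1, this.2]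

/-- Were there no walls, the connection would be its own mirror image read backwards; the middle
of this palindrome is `c_{1/2}` or some `c_γ`. -/
lemma walls_nonempty (hsymm : T.IsSymm) : C.walls.Nonempty := by
  by_contra h
  have heq : C.points = C.mirror := symmDiff_eq_bot.1 (Finset.not_nonempty_iff_eq_empty.1 h)
  have hmem : C.point 0 ∈ C.mirror := heq ▸ mem_points.2 ⟨0, C.one_le_n, rfl⟩
  obtain ⟨j, hj, hj0⟩ := mem_points.1 (mem_mirror.1 hmem)
  have hchain := fun k => refl_point_eq_point_sub hsymm hj hj0.symm (k := k)
  obtain ⟨m, rfl | rfl⟩ := Nat.even_or_odd' j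
  · have hm := hchain m (by omega)
    rw [show 2 * m - m = m by omega] at hm
    refine C.invFun_iterate_ne_centerOpt m (by omega) none ?_
    change C.point m = T.centerHalf
    simp only [refl, centerHalf] at hm ⊢
    linarith
  · have hm := hchain m (by omega)
    rw [show 2 * m + 1 - m = m + 1 by omega] at hm
    obtain ⟨γ, hγ⟩ := exists_mem_interval (point_mem_Ico (C := C) (m + 1))
    rw [← toFun_point_succ, toFun_eq_refl hsymm hγ, refl_refl] at hm
    refine C.invFun_iterate_ne_centerOpt (m + 1) (by omega) (some γ) ?_
    change C.point (m + 1) = T.center γ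
    simp only [center]
    linarith

end Walls

section Parity

open Finset

lemma even_card_walls : Even #C.walls :=
  even_card_of_reflect (c := T.a + T.b) (fun _ => refl_mem_walls) centerHalf_notMem_walls

lemma even_card_walls_Ioo (hsymm : T.IsSymm) (γ : Fin T.d) :
    Even #(C.walls.filter (· ∈ Ioo (T.lep γ) (T.lep γ + T.len γ))) := by
  refine even_card_of_reflect (c := 2 * T.lep γ + T.len γ) (fun z => ?_) ?_
  · have hIoo : 2 * T.lep γ + T.len γ - z ∈ Ioo (T.lep γ) (T.lep γ + T.len γ) ↔
        z ∈ Ioo (T.lep γ) (T.lep γ + T.len γ) := by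
      simp only [Set.mem_Ioo]
      constructor <;> rintro ⟨h1, h2⟩ <;> constructor <;> linarith
    simp only [mem_filter, hIoo]
    exact and_congr_left (reflect_mem_walls hsymm)
  · have hc : (2 * T.lep γ + T.len γ) / 2 = T.center γ := by rw [center]; ring
    rw [hc, mem_filter]
    exact fun h => center_notMem_walls hsymm γ h.1

/-- With `L = ∂I_γ`, `R = L + λ_γ` and `u = L + R - x`, the point `T x = 𝓘_I u` has as many walls
weakly below it as there are weakly above `u`; those in `[u, R)` correspond under the reflection
of `I_γ` to those in `(L, x]`, and the numbers of walls below `L`, inside `(L, R)` and above `R`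
add up to an even number. -/
lemma toFun_preimage_evenBelow_walls (hsymm : T.IsSymm) :
    T.toFun ⁻¹' C.walls.evenBelow = C.walls.evenBelow := by
  ext x
  by_cases hx : x ∈ Ico T.a T.b
  swap
  · rw [Set.mem_preimage, toFun_of_notMem hx]
  obtain ⟨γ, hγ⟩ := exists_mem_interval hx
  have hevenS := C.even_card_walls
  have hevenIoo := C.even_card_walls_Ioo hsymm γ
  simp only [Set.mem_preimage, evenBelow, Set.mem_ofPred_eq, toFun_eq_refl hsymm hγ]
  set L := T.lep γ
  set R := T.lep γ + T.len γ
  set u := 2 * L + T.len γ - x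
  have hLR : L < R := by linarith [T.len_pos γ]
  have hxL : L ≤ x := hγ.1
  have hxR : x < R := hγ.2
  set S := C.walls
  have hsplitS := card_filter_eq_add (S := S) (p := fun _ => True) (q := (· ≤ L)) (r := (L < ·))
    (fun z _ => by grind) (fun z _ _ => by grind)
  have hsplitGtL := card_filter_eq_add (S := S) (p := (L < ·)) (q := (· ∈ Ioo L R)) (r := (R ≤ ·))
    (fun z _ => by grind) (fun z _ _ => by grind)
  have hsplitLeX := card_filter_eq_add (S := S) (p := (· ≤ x)) (q := (· ≤ L))
    (r := fun z => L < z ∧ z ≤ x) (fun z _ => by grind) (fun z _ _ => by grind)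
  have hsplitGeU := card_filter_eq_add (S := S) (p := (u ≤ ·)) (q := fun z => u ≤ z ∧ z < R)
    (r := (R ≤ ·)) (fun z _ => by grind) (fun z _ _ => by grind)
  have hrefl : #(S.filter (· ≤ T.refl u)) = #(S.filter (u ≤ ·)) :=
    card_filter_eq_of_reflect (c := T.a + T.b) (fun z => by simp only [refl]; grind)
      fun z _ => refl_mem_walls
  have hreflect : #(S.filter fun z => u ≤ z ∧ z < R) = #(S.filter fun z => L < z ∧ z ≤ x) :=
    card_filter_eq_of_reflect (c := 2 * L + T.len γ) (fun z => by grind)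
      fun z hz => reflect_mem_walls hsymm ⟨hz.1, by linarith [hz.2]⟩
  rw [filter_true] at hsplitS
  simp only [Nat.even_iff] at hevenS hevenIoo ⊢
  omega

end Parity

end CleanConnection

end IET

/-- a symmetric IET having a connection disjoint from
`{c_α | α ∈ 𝒜 ∪ {1/2}}` is not ergodic. -/
theorem stmt17 (T : IET) (hsymm : T.IsSymm)
    (hconn : ∃ s, T.IsConnection s ∧ ∀ σ : Option (Fin T.d), T.centerOpt σ ∉ s) :
    ¬ Ergodic T.toFun (volume.restrict (Set.Ico T.a T.b)) := by
  intro hE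
  obtain ⟨C⟩ := exists_cleanConnection hsymm hconn
  have hne := C.walls_nonempty hsymm
  have hwalls : ↑C.walls ⊆ Ioo T.a T.b := fun _ => CleanConnection.walls_subset_Ioo
  rcases hE.measure_self_or_compl_eq_zero Finset.measurableSet_evenBelow
      (C.toFun_preimage_evenBelow_walls hsymm) with h | h
  · exact Finset.volume_restrict_evenBelow_ne_zero hne hwalls h
  · exact Finset.volume_restrict_compl_evenBelow_ne_zero hne hwalls h
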